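/- The node-affinity graph map is 1-Lipschitz: for finite hypernetworks H and H', d_N(A_n(H), A_n(H')) ≤ d_H(H,H'). -/
import Mathlib


open Set

universe u

/-- A correspondence between two sets (types): a relation with surjective projections. -/
def IsCorr {α : Type*} {β : Type*} (R : Set (α × β)) : Prop :=
  (∀ a, ∃ b, (a, b) ∈ R) ∧ (∀ b, ∃ a, (a, b) ∈ R)

/-- Hypernetwork Gromov-Hausdorff distance. -/
noncomputable def dH {X Y X' Y' : Type*} (ω : X → Y → ℝ) (ω' : X' → Y' → ℝ) : ℝ :=
  (1/2) * sInf {ε : ℝ | 0 ≤ ε ∧ ∃ S : Set (X × X'), ∃ T : Set (Y × Y'),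
    IsCorr S ∧ IsCorr T ∧ ∀ p ∈ S, ∀ q ∈ T, |ω p.1 q.1 - ω' p.2 q.2| ≤ ε}

/-- Network Gromov-Hausdorff distance. -/
noncomputable def dN {X X' : Type*} (ω : X → X → ℝ) (ω' : X' → X' → ℝ) : ℝ :=
  (1/2) * sInf {ε : ℝ | 0 ≤ ε ∧ ∃ R : Set (X × X'), IsCorr R ∧
    ∀ p ∈ R, ∀ q ∈ R, |ω p.1 q.1 - ω' p.2 q.2| ≤ ε}

/-- The energy of a node-chain given by nodes `xs` and hyperedges `ys`. -/
noncomputable def chainEnergy {X Y : Type*} (ω : X → Y → ℝ) (k : ℕ)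
    (xs : Fin (k + 2) → X) (ys : Fin (k + 1) → Y) : ℝ :=
  ⨅ i : Fin (k + 1), min |ω (xs i.castSucc) (ys i)| |ω (xs i.succ) (ys i)|

/-- The node affinity: maximal energy over node-chains from `x` to `x'`. -/
noncomputable def affinity {X Y : Type*} (ω : X → Y → ℝ) (x x' : X) : ℝ :=
  sSup {e : ℝ | ∃ (k : ℕ) (xs : Fin (k + 2) → X) (ys : Fin (k + 1) → Y),
    xs 0 = x ∧ xs (Fin.last (k + 1)) = x' ∧ chainEnergy ω k xs ys = e}

section Aux

variable {X Y : Type*} [Finite X] [Finite Y] [Nonempty X] [Nonempty Y]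

lemma affinity_set_nonempty (ω : X → Y → ℝ) (x z : X) :
    {e : ℝ | ∃ (k : ℕ) (xs : Fin (k + 2) → X) (ys : Fin (k + 1) → Y),
      xs 0 = x ∧ xs (Fin.last (k + 1)) = z ∧ chainEnergy ω k xs ys = e}.Nonempty := by
  exact ⟨_, 0, ![x, z], fun _ => Classical.arbitrary Y, rfl, rfl, rfl⟩

lemma affinity_set_bddAbove (ω : X → Y → ℝ) (x z : X) :
    BddAbove {e : ℝ | ∃ (k : ℕ) (xs : Fin (k + 2) → X) (ys : Fin (k + 1) → Y),
      xs 0 = x ∧ xs (Fin.last (k + 1)) = z ∧ chainEnergy ω k xs ys = e} := by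
  obtain ⟨M, hM⟩ := (Set.finite_range (fun p : X × Y => |ω p.1 p.2|)).bddAbove
  refine ⟨M, ?_⟩
  rintro e ⟨k, xs, ys, -, -, rfl⟩
  calc chainEnergy ω k xs ys
      ≤ min |ω (Fin.castSucc (0 : Fin (k+1)) |> xs) (ys 0)|
          |ω (Fin.succ (0 : Fin (k+1)) |> xs) (ys 0)| :=
        ciInf_le ((Set.finite_range _).bddBelow) 0
    _ ≤ |ω (Fin.castSucc (0 : Fin (k+1)) |> xs) (ys 0)| := min_le_left _ _
    _ ≤ M := hM (Set.mem_range_self (_, ys 0))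

lemma affinity_le_corr {X Y X' Y' : Type*} [Finite X] [Finite Y] [Finite X'] [Finite Y']
    [Nonempty X] [Nonempty Y] [Nonempty X'] [Nonempty Y']
    (ω : X → Y → ℝ) (ω' : X' → Y' → ℝ) {ε : ℝ}
    {S : Set (X × X')} {T : Set (Y × Y')} (hS : IsCorr S) (hT : IsCorr T)
    (hd : ∀ p ∈ S, ∀ q ∈ T, |ω p.1 q.1 - ω' p.2 q.2| ≤ ε)
    {x z : X} {x' z' : X'} (hx : (x, x') ∈ S) (hz : (z, z') ∈ S) :
    affinity ω x z ≤ affinity ω' x' z' + ε := by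
  classical
  apply csSup_le (affinity_set_nonempty ω x z)
  rintro e ⟨k, xs, ys, hx0, hxl, rfl⟩
  set xs' : Fin (k + 2) → X' := fun i =>
    if i = 0 then x' else if i = Fin.last (k + 1) then z'
      else Classical.choose (hS.1 (xs i)) with hxs'
  have hmem : ∀ i, (xs i, xs' i) ∈ S := by
    intro i
    simp only [hxs']
    split_ifs with h1 h2
    · rw [h1, hx0]; exact hx
    · rw [h2, hxl]; exact hz
    · exact Classical.choose_spec (hS.1 (xs i))
  set ys' : Fin (k + 1) → Y' := fun j => Classical.choose (hT.1 (ys j)) with hys'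
  have hymem : ∀ j, (ys j, ys' j) ∈ T := fun j => Classical.choose_spec (hT.1 (ys j))
  have hlast_ne : (Fin.last (k + 1) : Fin (k + 2)) ≠ 0 := by
    simp [Fin.ext_iff]
  have key : chainEnergy ω k xs ys - ε ≤ chainEnergy ω' k xs' ys' := by
    rw [chainEnergy, chainEnergy]
    apply le_ciInf
    intro i
    have h1 : |ω (xs i.castSucc) (ys i)| - ε ≤ |ω' (xs' i.castSucc) (ys' i)| := by
      have hd1 := hd _ (hmem i.castSucc) _ (hymem i)
      have habs := abs_sub_abs_le_abs_sub (ω (xs i.castSucc) (ys i)) (ω' (xs' i.castSucc) (ys' i))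
      simp only at hd1
      linarith
    have h2 : |ω (xs i.succ) (ys i)| - ε ≤ |ω' (xs' i.succ) (ys' i)| := by
      have hd1 := hd _ (hmem i.succ) _ (hymem i)
      have habs := abs_sub_abs_le_abs_sub (ω (xs i.succ) (ys i)) (ω' (xs' i.succ) (ys' i))
      simp only at hd1
      linarith
    have h3 : (⨅ j : Fin (k+1), min |ω (xs j.castSucc) (ys j)| |ω (xs j.succ) (ys j)|)
        ≤ min |ω (xs i.castSucc) (ys i)| |ω (xs i.succ) (ys i)| :=
      ciInf_le ((Set.finite_range _).bddBelow) i
    have h4 := min_le_left |ω (xs i.castSucc) (ys i)| |ω (xs i.succ) (ys i)|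
    have h5 := min_le_right |ω (xs i.castSucc) (ys i)| |ω (xs i.succ) (ys i)|
    apply le_min <;> linarith
  have hmemset : chainEnergy ω' k xs' ys' ≤ affinity ω' x' z' := by
    apply le_csSup (affinity_set_bddAbove ω' x' z')
    refine ⟨k, xs', ys', ?_, ?_, rfl⟩
    · simp [hxs']
    · simp [hxs', hlast_ne]
  linarith

end Aux

/-- The node-affinity graph map is 1-Lipschitz. -/
theorem affinity_lipschitz {X Y X' Y' : Type u}
    [Finite X] [Finite Y] [Finite X'] [Finite Y']
    [Nonempty X] [Nonempty Y] [Nonempty X'] [Nonempty Y']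
    (ω : X → Y → ℝ) (ω' : X' → Y' → ℝ) :
    dN (affinity ω) (affinity ω') ≤ dH ω ω' := by
  rw [dN, dH]
  have h0 : (0:ℝ) ≤ 1/2 := by norm_num
  refine mul_le_mul_of_nonneg_left (csInf_le_csInf ⟨0, fun ε hε => hε.1⟩ ?_ ?_) h0
  · obtain ⟨M, hM⟩ := (Set.finite_range
      (fun p : (X × X') × (Y × Y') => |ω p.1.1 p.2.1 - ω' p.1.2 p.2.2|)).bddAbove
    refine ⟨max M 0, le_max_right _ _, Set.univ, Set.univ,
      ⟨fun a => ⟨Classical.arbitrary _, trivial⟩, fun b => ⟨Classical.arbitrary _, trivial⟩⟩,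
      ⟨fun a => ⟨Classical.arbitrary _, trivial⟩, fun b => ⟨Classical.arbitrary _, trivial⟩⟩,
      fun p _ q _ => le_trans (hM (Set.mem_range_self (p, q))) (le_max_left _ _)⟩
  · rintro ε ⟨hε0, S, T, hS, hT, hd⟩
    refine ⟨hε0, S, hS, ?_⟩
    rintro ⟨x, x'⟩ hp ⟨z, z'⟩ hq
    rw [abs_sub_le_iff]
    constructor
    · have := affinity_le_corr ω ω' hS hT hd hp hq
      linarith
    · have hS' : IsCorr {p : X' × X | (p.2, p.1) ∈ S} := ⟨hS.2, hS.1⟩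
      have hT' : IsCorr {q : Y' × Y | (q.2, q.1) ∈ T} := ⟨hT.2, hT.1⟩
      have hd' : ∀ p ∈ {p : X' × X | (p.2, p.1) ∈ S}, ∀ q ∈ {q : Y' × Y | (q.2, q.1) ∈ T},
          |ω' p.1 q.1 - ω p.2 q.2| ≤ ε := by
        intro p hp' q hq'
        rw [abs_sub_comm]
        exact hd _ hp' _ hq'
      have := affinity_le_corr ω' ω hS' hT' hd' (x := x') (z := z') (x' := x) (z' := z)
        (show ((x', x) : X' × X) ∈ {p : X' × X | (p.2, p.1) ∈ S} from hp)
        (show ((z', z) : X' × X) ∈ {p : X' × X | (p.2, p.1) ∈ S} from hq)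
      linarith
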